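/- For jointly distributed discrete random variables with (X_v)_{v∈O_l} mutually independent, the function (U, W) ↦ I(X_U ; Ŷ_W | X_{O_l \ U}) is non-decreasing: if U₁ ⊆ U ⊆ O_l and W₁ ⊆ W ⊆ O_{l+1}, then I(X_{U₁}; Ŷ_{W₁} | X_{O_l \ U₁}) ≤ I(X_U ; Ŷ_W | X_{O_l \ U}). -/

import Mathlib

open Finset

noncomputable section

/-- Probability that the discrete random variable `Z` takes the value `b`,
under the weight function `p` on the finite sample space `Ω`. -/
def prOf {Ω : Type} [Fintype Ω] (p : Ω → ℝ) {β : Type} [DecidableEq β]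
    (Z : Ω → β) (b : β) : ℝ :=
  ∑ ω, if Z ω = b then p ω else 0

/-- Shannon entropy (base 2) of a discrete random variable. -/
def ent {Ω : Type} [Fintype Ω] (p : Ω → ℝ) {β : Type} [Fintype β] [DecidableEq β]
    (Z : Ω → β) : ℝ :=
  -∑ b, prOf p Z b * Real.logb 2 (prOf p Z b)

/-- Conditional entropy `H(Z | W)`. -/
def condEnt {Ω : Type} [Fintype Ω] (p : Ω → ℝ) {β γ : Type} [Fintype β] [DecidableEq β]
    [Fintype γ] [DecidableEq γ] (Z : Ω → β) (W : Ω → γ) : ℝ :=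
  ent p (fun ω => (Z ω, W ω)) - ent p W

/-- Mutual information `I(Z₁; Z₂)`. -/
def mi {Ω : Type} [Fintype Ω] (p : Ω → ℝ) {β₁ β₂ : Type} [Fintype β₁] [DecidableEq β₁]
    [Fintype β₂] [DecidableEq β₂] (Z₁ : Ω → β₁) (Z₂ : Ω → β₂) : ℝ :=
  ent p Z₁ + ent p Z₂ - ent p (fun ω => (Z₁ ω, Z₂ ω))

/-- Conditional mutual information `I(Z₁; Z₂ | W)`. -/
def condMI {Ω : Type} [Fintype Ω] (p : Ω → ℝ) {β₁ β₂ γ : Type} [Fintype β₁] [DecidableEq β₁]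
    [Fintype β₂] [DecidableEq β₂] [Fintype γ] [DecidableEq γ]
    (Z₁ : Ω → β₁) (Z₂ : Ω → β₂) (W : Ω → γ) : ℝ :=
  condEnt p Z₁ W + condEnt p Z₂ W - condEnt p (fun ω => (Z₁ ω, Z₂ ω)) W

/-- The joint random variable `(X_a)_{a ∈ A}` over a finite index set `A`. -/
def joint {Ω ι β : Type} (X : ι → Ω → β) (A : Finset ι) : Ω → (A → β) :=
  fun ω a => X a.1 ω

/-!
Everything reduces to submodularity of entropy, `H(A,B,C) + H(C) ≤ H(A,C) + H(B,C)`, which is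
Gibbs' inequality for the law of `(A,B)` given `C = z` against the product of its two marginals.
Since `I(X_U; Y | X_{Uᶜ}) = H(Y | X_{Uᶜ}) - H(Y | X)`, enlarging `U` only coarsens the first
conditioning and so can only increase `H(Y | X_{Uᶜ})`; enlarging `W` replaces `Y` by a random
variable that determines it, and `I(Z; Y | C) = H(Z | C) - H(Z | Y, C)` grows with `Y` for the
same reason.
-/

open Real

theorem sum_mul_logb_le_sum_mul_logb {ι : Type} [Fintype ι] {b : ℝ} (hb : 1 < b) {a q : ι → ℝ}
    (ha : ∀ i, 0 ≤ a i) (hq : ∀ i, 0 ≤ q i) (hqa : ∀ i, q i = 0 → a i = 0)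
    (hsum : ∑ i, q i ≤ ∑ i, a i) :
    ∑ i, a i * logb b (q i) ≤ ∑ i, a i * logb b (a i) := by
  have hlog : 0 < log b := log_pos hb
  have hterm : ∀ i, a i * logb b (q i) ≤ a i * logb b (a i) + (q i - a i) / log b := by
    intro i
    rcases (ha i).eq_or_lt with h0 | h0
    · rw [← h0]
      simpa using div_nonneg (hq i) hlog.le
    have hqi : 0 < q i := (hq i).lt_of_ne fun h => h0.ne' (hqa i h.symm)
    have hlogq : a i * log (q i) ≤ a i * log (a i) + (q i - a i) := by
      have := mul_le_mul_of_nonneg_left (log_le_sub_one_of_pos (div_pos hqi h0)) h0.le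
      rw [log_div hqi.ne' h0.ne', mul_sub, mul_sub, mul_div_cancel₀ _ h0.ne'] at this
      linarith
    calc a i * logb b (q i) = a i * log (q i) / log b := by rw [logb, mul_div_assoc]
      _ ≤ (a i * log (a i) + (q i - a i)) / log b := div_le_div_of_nonneg_right hlogq hlog.le
      _ = a i * logb b (a i) + (q i - a i) / log b := by rw [logb, add_div, mul_div_assoc]
  calc ∑ i, a i * logb b (q i) ≤ ∑ i, (a i * logb b (a i) + (q i - a i) / log b) :=
        sum_le_sum fun i _ => hterm i
    _ = ∑ i, a i * logb b (a i) + (∑ i, q i - ∑ i, a i) / log b := by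
        rw [sum_add_distrib, ← sum_div, sum_sub_distrib]
    _ ≤ ∑ i, a i * logb b (a i) :=
        add_le_of_nonpos_right (div_nonpos_of_nonpos_of_nonneg (by linarith) hlog.le)

theorem sum_mul_logb_marginals_le {α β : Type} [Fintype α] [Fintype β] {b : ℝ} (hb : 1 < b)
    (a : α → β → ℝ) (ha : ∀ x y, 0 ≤ a x y) :
    (∑ x, (∑ y, a x y) * logb b (∑ y, a x y)) + ∑ y, (∑ x, a x y) * logb b (∑ x, a x y) ≤
      (∑ x, ∑ y, a x y * logb b (a x y)) + (∑ x, ∑ y, a x y) * logb b (∑ x, ∑ y, a x y) := by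
  set r : α → ℝ := fun x => ∑ y, a x y
  set c : β → ℝ := fun y => ∑ x, a x y
  set s : ℝ := ∑ x, ∑ y, a x y
  have hcs : ∑ y, c y = s := sum_comm
  have hpos : ∀ x y, 0 < a x y → 0 < r x ∧ 0 < c y ∧ 0 < s := fun x y h =>
    have hrx : 0 < r x := h.trans_le (single_le_sum (fun y _ => ha x y) (mem_univ y))
    ⟨hrx, h.trans_le (single_le_sum (fun x _ => ha x y) (mem_univ x)),
      hrx.trans_le (single_le_sum (fun x _ => sum_nonneg fun y _ => ha x y) (mem_univ x))⟩
  have hgibbs := sum_mul_logb_le_sum_mul_logb hb (a := fun t : α × β => a t.1 t.2)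
    (q := fun t => r t.1 * c t.2 / s) (fun t => ha t.1 t.2)
    (fun t => div_nonneg (mul_nonneg (sum_nonneg fun y _ => ha _ y)
      (sum_nonneg fun x _ => ha x _)) (sum_nonneg fun x _ => sum_nonneg fun y _ => ha x y))
    (fun t ht => by
      by_contra h
      obtain ⟨h1, h2, h3⟩ := hpos t.1 t.2 ((ha t.1 t.2).lt_of_ne' h)
      exact (div_pos (mul_pos h1 h2) h3).ne' ht)
    (by
      rw [Fintype.sum_prod_type, Fintype.sum_prod_type]
      simp only [← sum_div, ← mul_sum, ← sum_mul, hcs]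
      exact (mul_self_div_self s).le)
  have hsplit : ∀ x y, a x y * logb b (r x * c y / s) =
      a x y * logb b (r x) + a x y * logb b (c y) - a x y * logb b s := by
    intro x y
    rcases (ha x y).eq_or_lt with h0 | h0
    · simp [← h0]
    obtain ⟨h1, h2, h3⟩ := hpos x y h0
    rw [logb_div (mul_pos h1 h2).ne' h3.ne', logb_mul h1.ne' h2.ne']
    ring
  simp only [Fintype.sum_prod_type, hsplit, sum_sub_distrib, sum_add_distrib] at hgibbs
  have er : ∑ x, ∑ y, a x y * logb b (r x) = ∑ x, r x * logb b (r x) := by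
    simp only [← sum_mul]; rfl
  have ec : ∑ x, ∑ y, a x y * logb b (c y) = ∑ y, c y * logb b (c y) := by
    rw [sum_comm]; simp only [← sum_mul]; rfl
  have es : ∑ x, ∑ y, a x y * logb b s = s * logb b s := by
    simp only [← sum_mul]; rfl
  linarith

section Entropy

variable {Ω : Type} [Fintype Ω] (p : Ω → ℝ)

theorem prOf_nonneg (hp : ∀ ω, 0 ≤ p ω) {β : Type} [DecidableEq β] (Z : Ω → β) (b : β) :
    0 ≤ prOf p Z b :=
  sum_nonneg fun ω _ => by split_ifs <;> simp [hp ω]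

theorem sum_prOf_mul {β : Type} [Fintype β] [DecidableEq β] (Z : Ω → β) (f : β → ℝ) :
    ∑ b, prOf p Z b * f b = ∑ ω, p ω * f (Z ω) := by
  simp only [prOf, sum_mul, ite_mul, zero_mul]
  rw [sum_comm]
  simp

theorem prOf_comp {β β' : Type} [Fintype β] [DecidableEq β] [DecidableEq β'] (Z : Ω → β)
    (f : β → β') (c : β') :
    prOf p (fun ω => f (Z ω)) c = ∑ b, if f b = c then prOf p Z b else 0 := by
  have := sum_prOf_mul p Z fun b => if f b = c then (1 : ℝ) else 0
  simp only [mul_boole] at this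
  rw [this, prOf]

theorem ent_eq_neg_sum_mul_logb_prOf {β : Type} [Fintype β] [DecidableEq β] (Z : Ω → β) :
    ent p Z = -∑ ω, p ω * logb 2 (prOf p Z (Z ω)) := by
  rw [ent, sum_prOf_mul p Z fun b => logb 2 (prOf p Z b)]

theorem ent_congr {β β' : Type} [Fintype β] [DecidableEq β] [Fintype β'] [DecidableEq β']
    {Z : Ω → β} {Z' : Ω → β'} (h : ∀ ω ω', Z ω = Z ω' ↔ Z' ω = Z' ω') :
    ent p Z = ent p Z' := by
  simp only [ent_eq_neg_sum_mul_logb_prOf, prOf, h]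

theorem ent_submodular {β₁ β₂ γ : Type} [Fintype β₁] [DecidableEq β₁] [Fintype β₂]
    [DecidableEq β₂] [Fintype γ] [DecidableEq γ] (hp : ∀ ω, 0 ≤ p ω)
    (Z₁ : Ω → β₁) (Z₂ : Ω → β₂) (W : Ω → γ) :
    ent p (fun ω => ((Z₁ ω, Z₂ ω), W ω)) + ent p W ≤
      ent p (fun ω => (Z₁ ω, W ω)) + ent p (fun ω => (Z₂ ω, W ω)) := by
  set T : Ω → (β₁ × β₂) × γ := fun ω => ((Z₁ ω, Z₂ ω), W ω)
  set a : β₁ → β₂ → γ → ℝ := fun x y z => prOf p T ((x, y), z)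
  have m₁ : ∀ x z, prOf p (fun ω => (Z₁ ω, W ω)) (x, z) = ∑ y, a x y z := fun x z => by
    refine (prOf_comp p T (fun t => (t.1.1, t.2)) (x, z)).trans ?_
    simp only [Prod.ext_iff, ite_and, Fintype.sum_prod_type, sum_ite_irrel, sum_ite_eq', mem_univ,
      ↓reduceIte, sum_const_zero, a]
    rw [sum_comm]
    simp
  have m₂ : ∀ y z, prOf p (fun ω => (Z₂ ω, W ω)) (y, z) = ∑ x, a x y z := fun y z => by
    refine (prOf_comp p T (fun t => (t.1.2, t.2)) (y, z)).trans ?_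
    simp [a, Fintype.sum_prod_type, Prod.ext_iff, ite_and]
  have m : ∀ z, prOf p W z = ∑ x, ∑ y, a x y z := fun z => by
    refine (prOf_comp p T (fun t => t.2) z).trans ?_
    simp [a, Fintype.sum_prod_type]
  have hT : ent p T = -∑ z, ∑ x, ∑ y, a x y z * logb 2 (a x y z) := by
    rw [ent, Fintype.sum_prod_type_right]
    simp only [Fintype.sum_prod_type, a]
  have h₁ : ent p (fun ω => (Z₁ ω, W ω)) =
      -∑ z, ∑ x, (∑ y, a x y z) * logb 2 (∑ y, a x y z) := by
    rw [ent, Fintype.sum_prod_type_right]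
    simp only [m₁]
  have h₂ : ent p (fun ω => (Z₂ ω, W ω)) =
      -∑ z, ∑ y, (∑ x, a x y z) * logb 2 (∑ x, a x y z) := by
    rw [ent, Fintype.sum_prod_type_right]
    simp only [m₂]
  have hW : ent p W = -∑ z, (∑ x, ∑ y, a x y z) * logb 2 (∑ x, ∑ y, a x y z) := by
    simp only [ent, m]
  have key := sum_le_sum fun z (_ : z ∈ univ) => sum_mul_logb_marginals_le one_lt_two
    (fun x y => a x y z) fun x y => prOf_nonneg p hp T _
  simp only [sum_add_distrib] at key
  rw [hT, h₁, h₂, hW]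
  linarith

theorem condEnt_le_condEnt_of_determines {β γ γ' : Type} [Fintype β] [DecidableEq β]
    [Fintype γ] [DecidableEq γ] [Fintype γ'] [DecidableEq γ'] (hp : ∀ ω, 0 ≤ p ω)
    (Z : Ω → β) {W : Ω → γ} {W' : Ω → γ'} (hW : ∀ ω ω', W ω = W ω' → W' ω = W' ω') :
    condEnt p Z W ≤ condEnt p Z W' := by
  have hsub := ent_submodular p hp W Z W'
  have h₁ : ent p (fun ω => ((W ω, Z ω), W' ω)) = ent p (fun ω => (Z ω, W ω)) :=
    ent_congr p fun ω ω' => by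
      simp only [Prod.mk.injEq]
      exact ⟨fun h => ⟨h.1.2, h.1.1⟩, fun h => ⟨⟨h.2, h.1⟩, hW ω ω' h.2⟩⟩
  have h₂ : ent p (fun ω => (W ω, W' ω)) = ent p W :=
    ent_congr p fun ω ω' => by
      simp only [Prod.mk.injEq]
      exact ⟨And.left, fun h => ⟨h, hW ω ω' h⟩⟩
  rw [condEnt, condEnt]
  linarith

theorem condMI_comm {β₁ β₂ γ : Type} [Fintype β₁] [DecidableEq β₁] [Fintype β₂]
    [DecidableEq β₂] [Fintype γ] [DecidableEq γ] (Z₁ : Ω → β₁) (Z₂ : Ω → β₂) (W : Ω → γ) :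
    condMI p Z₁ Z₂ W = condMI p Z₂ Z₁ W := by
  have : ent p (fun ω => ((Z₁ ω, Z₂ ω), W ω)) = ent p (fun ω => ((Z₂ ω, Z₁ ω), W ω)) :=
    ent_congr p fun ω ω' => by simp only [Prod.mk.injEq]; tauto
  simp only [condMI, condEnt, this]
  ring

theorem condMI_eq_condEnt_sub_condEnt {β₁ β₂ γ : Type} [Fintype β₁] [DecidableEq β₁]
    [Fintype β₂] [DecidableEq β₂] [Fintype γ] [DecidableEq γ]
    (Z₁ : Ω → β₁) (Z₂ : Ω → β₂) (W : Ω → γ) :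
    condMI p Z₁ Z₂ W = condEnt p Z₁ W - condEnt p Z₁ (fun ω => (Z₂ ω, W ω)) := by
  have : ent p (fun ω => ((Z₁ ω, Z₂ ω), W ω)) = ent p (fun ω => (Z₁ ω, (Z₂ ω, W ω))) :=
    ent_congr p fun ω ω' => by simp only [Prod.mk.injEq, and_assoc]
  simp only [condMI, condEnt, this]
  ring

theorem condMI_le_condMI_of_determines_right {β₁ β₂ β₂' γ : Type} [Fintype β₁] [DecidableEq β₁]
    [Fintype β₂] [DecidableEq β₂] [Fintype β₂'] [DecidableEq β₂'] [Fintype γ] [DecidableEq γ]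
    (hp : ∀ ω, 0 ≤ p ω) (Z₁ : Ω → β₁) {Z₂ : Ω → β₂} {Z₂' : Ω → β₂'} (W : Ω → γ)
    (hZ : ∀ ω ω', Z₂ ω = Z₂ ω' → Z₂' ω = Z₂' ω') :
    condMI p Z₁ Z₂' W ≤ condMI p Z₁ Z₂ W := by
  rw [condMI_eq_condEnt_sub_condEnt, condMI_eq_condEnt_sub_condEnt]
  have := condEnt_le_condEnt_of_determines p hp Z₁ (W := fun ω => (Z₂ ω, W ω))
    (W' := fun ω => (Z₂' ω, W ω)) fun ω ω' h => by
      simp only [Prod.mk.injEq] at h ⊢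
      exact ⟨hZ ω ω' h.1, h.2⟩
  linarith

theorem condMI_le_condMI_of_determines_cond {β₁ β₁' β₂ γ γ' : Type} [Fintype β₁]
    [DecidableEq β₁] [Fintype β₁'] [DecidableEq β₁'] [Fintype β₂] [DecidableEq β₂]
    [Fintype γ] [DecidableEq γ] [Fintype γ'] [DecidableEq γ'] (hp : ∀ ω, 0 ≤ p ω)
    {Z₁ : Ω → β₁} {Z₁' : Ω → β₁'} (Z₂ : Ω → β₂) {W : Ω → γ} {W' : Ω → γ'}
    (hZW : ∀ ω ω', (Z₁ ω, W ω) = (Z₁ ω', W ω') ↔ (Z₁' ω, W' ω) = (Z₁' ω', W' ω'))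
    (hW : ∀ ω ω', W ω = W ω' → W' ω = W' ω') :
    condMI p Z₁ Z₂ W ≤ condMI p Z₁' Z₂ W' := by
  rw [condMI_comm, condMI_eq_condEnt_sub_condEnt, condMI_comm, condMI_eq_condEnt_sub_condEnt]
  have hcongr : condEnt p Z₂ (fun ω => (Z₁ ω, W ω)) = condEnt p Z₂ (fun ω => (Z₁' ω, W' ω)) := by
    have : ent p (fun ω => (Z₂ ω, (Z₁ ω, W ω))) = ent p (fun ω => (Z₂ ω, (Z₁' ω, W' ω))) :=
      ent_congr p fun ω ω' =>
        Prod.mk_inj.trans ((and_congr_right' (hZW ω ω')).trans Prod.mk_inj.symm)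
    rw [condEnt, condEnt, this, ent_congr p hZW]
  linarith [condEnt_le_condEnt_of_determines p hp Z₂ hW]

end Entropy

theorem joint_eq_joint_iff {Ω ι β : Type} (X : ι → Ω → β) (A : Finset ι) (ω ω' : Ω) :
    joint X A ω = joint X A ω' ↔ ∀ i ∈ A, X i ω = X i ω' := by
  simp [joint, funext_iff]

theorem joint_eq_joint_of_subset {Ω ι β : Type} (X : ι → Ω → β) {A B : Finset ι} (hAB : A ⊆ B)
    {ω ω' : Ω} (h : joint X B ω = joint X B ω') : joint X A ω = joint X A ω' := by
  rw [joint_eq_joint_iff] at h ⊢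
  exact fun i hi => h i (hAB hi)

theorem joint_compl_pair_eq_iff {Ω ι β : Type} [Fintype ι] [DecidableEq ι] (X : ι → Ω → β)
    (A : Finset ι) (ω ω' : Ω) :
    (joint X A ω, joint X Aᶜ ω) = (joint X A ω', joint X Aᶜ ω') ↔ ∀ i, X i ω = X i ω' := by
  simp only [Prod.mk.injEq, joint_eq_joint_iff, mem_compl]
  exact ⟨fun h i => (em (i ∈ A)).elim (h.1 i) (h.2 i), fun h => ⟨fun i _ => h i, fun i _ => h i⟩⟩

theorem stmt5_general {Ω ι₁ ι₂ β γ : Type} [Fintype Ω] [Fintype ι₁] [DecidableEq ι₁]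
    [Fintype ι₂] [DecidableEq ι₂] [Fintype β] [DecidableEq β] [Fintype γ] [DecidableEq γ]
    (p : Ω → ℝ) (hp : ∀ ω, 0 ≤ p ω)
    (X : ι₁ → Ω → β) (Yh : ι₂ → Ω → γ)
    (U₁ U : Finset ι₁) (W₁ W : Finset ι₂) (hU : U₁ ⊆ U) (hW : W₁ ⊆ W) :
    condMI p (joint X U₁) (joint Yh W₁) (joint X U₁ᶜ) ≤
      condMI p (joint X U) (joint Yh W) (joint X Uᶜ) :=
  calc condMI p (joint X U₁) (joint Yh W₁) (joint X U₁ᶜ)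
      ≤ condMI p (joint X U) (joint Yh W₁) (joint X Uᶜ) :=
        condMI_le_condMI_of_determines_cond p hp _
          (fun ω ω' => by rw [joint_compl_pair_eq_iff, joint_compl_pair_eq_iff])
          fun _ _ => joint_eq_joint_of_subset X (compl_subset_compl.2 hU)
    _ ≤ condMI p (joint X U) (joint Yh W) (joint X Uᶜ) :=
        condMI_le_condMI_of_determines_right p hp _ _ fun _ _ => joint_eq_joint_of_subset Yh hW

/-- With `(X_v)` mutually independent, `(U, W) ↦ I(X_U ; Ŷ_W | X_{O_l \ U})`
is non-decreasing in both arguments. -/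
theorem stmt5 {Ω ι₁ ι₂ β γ : Type} [Fintype Ω] [Fintype ι₁] [DecidableEq ι₁]
    [Fintype ι₂] [DecidableEq ι₂] [Fintype β] [DecidableEq β] [Fintype γ] [DecidableEq γ]
    (p : Ω → ℝ) (hp : ∀ ω, 0 ≤ p ω) (hp1 : ∑ ω, p ω = 1)
    (X : ι₁ → Ω → β) (Yh : ι₂ → Ω → γ)
    (hindep : ∀ x : ι₁ → β, prOf p (fun ω i => X i ω) x = ∏ i, prOf p (X i) (x i))
    (U₁ U : Finset ι₁) (W₁ W : Finset ι₂) (hU : U₁ ⊆ U) (hW : W₁ ⊆ W) :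
    condMI p (joint X U₁) (joint Yh W₁) (joint X U₁ᶜ) ≤
      condMI p (joint X U) (joint Yh W) (joint X Uᶜ) :=
  stmt5_general p hp X Yh U₁ U W₁ W hU hW
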